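/- arXiv:1010.1123 — 5 statements merged into one kernel-verified Lean document; each statement's English description precedes it below -/
import Mathlib

section
/- With notation as above, if the three complex eigenvalues ρ₁, ρ₂, ρ₃ of W satisfy ρ₁ + ρ₂ + ρ₃ = 0 and the Weyl invariant M = a³/b² − 6 (where a = ρ₁² + ρ₂² + ρ₃², b = ρ₁³ + ρ₂³ + ρ₃³ ≠ 0) is a positive real number, then the nine eigenvalues ρᵢ·conj(ρⱼ) of T = W ⊗ W̄ are all real, consisting of three simple values |ρᵢ|² and three double values τᵢ = ρⱼ·conj(ρₖ). -/
open Complex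

lemma cubic_root_real (t : ℝ) (ht : 6 < t) (x : ℂ)
    (heq : x ^ 3 = (t : ℂ) / 2 * x + (t : ℂ) / 3) : x.im = 0 := by
  by_contra hv
  have h1 := congrArg Complex.im heq
  have h2 := congrArg Complex.re heq
  simp [pow_succ, Complex.mul_im, Complex.mul_re] at h1 h2
  set u := x.re; set v := x.im
  have hv2 : 0 < v ^ 2 := by positivity
  have hc : 3 * u ^ 2 - v ^ 2 = t / 2 := by
    have := mul_right_cancel₀ hv (show (3 * u ^ 2 - v ^ 2) * v = (t / 2) * v by ring_nf; ring_nf at h1; linarith)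
    linarith
  have hd : -2 * u ^ 3 - 2 * u * v ^ 2 = t / 3 := by nlinarith [h2, hc]
  have hkey : t ^ 3 / 2 - 3 * t ^ 2 = -4 * v ^ 2 * (9 * u ^ 2 + v ^ 2) ^ 2 := by
    linear_combination (-4 * ((t/2)^2 + (t/2)*(3*u^2-v^2) + (3*u^2-v^2)^2)) * hc + (27*(t/3 + (-2*u^3-2*u*v^2))) * hd
  nlinarith [mul_pos hv2 (show (0:ℝ) < (9*u^2+v^2)^2 by positivity), mul_pos (show (0:ℝ) < t^2 by positivity) (show (0:ℝ) < t - 6 by linarith)]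

/-- for type IM⁺ (traceless Weyl eigenvalues `ρ i` with `b ≠ 0` and
`M = a³/b² − 6` a positive real), the nine Bel-Robinson eigenvalues
`ρ i * conj (ρ j)` are all real and consist of the three simple values `|ρ i|²`
together with the three double values `τ i = ρ j * conj (ρ k)` (cyclic). -/
theorem BR_typeIMplus_eigenvalues (ρ : Fin 3 → ℂ) (a b : ℂ)
    (hsum : ρ 0 + ρ 1 + ρ 2 = 0)
    (ha : a = ρ 0 ^ 2 + ρ 1 ^ 2 + ρ 2 ^ 2)
    (hb : b = ρ 0 ^ 3 + ρ 1 ^ 3 + ρ 2 ^ 3)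
    (hb0 : b ≠ 0)
    (hM : ∃ m : ℝ, 0 < m ∧ a ^ 3 / b ^ 2 - 6 = (m : ℂ)) :
    (∀ i j : Fin 3, (ρ i * (starRingEnd ℂ) (ρ j)).im = 0) ∧
    (Finset.univ : Finset (Fin 3 × Fin 3)).val.map
        (fun p => ρ p.1 * (starRingEnd ℂ) (ρ p.2)) =
      {((‖ρ 0‖ : ℂ)) ^ 2, ((‖ρ 1‖ : ℂ)) ^ 2, ((‖ρ 2‖ : ℂ)) ^ 2,
        ρ 1 * (starRingEnd ℂ) (ρ 2), ρ 1 * (starRingEnd ℂ) (ρ 2),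
        ρ 2 * (starRingEnd ℂ) (ρ 0), ρ 2 * (starRingEnd ℂ) (ρ 0),
        ρ 0 * (starRingEnd ℂ) (ρ 1), ρ 0 * (starRingEnd ℂ) (ρ 1)} := by
  obtain ⟨m, hm, hMeq⟩ := hM
  have h2sub : ρ 2 = -ρ 0 - ρ 1 := by linear_combination hsum
  have hab : a ^ 3 = ((6 : ℂ) + (m : ℂ)) * b ^ 2 := by
    field_simp at hMeq
    linear_combination hMeq
  have ha0 : a ≠ 0 := by
    intro h
    have h6 : ((6 : ℂ) + (m : ℂ)) ≠ 0 := by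
      intro hh
      have := congrArg Complex.re hh
      simp at this
      linarith
    have : ((6:ℂ) + m) * b ^ 2 = 0 := by rw [← hab, h]; ring
    rcases mul_eq_zero.mp this with h' | h'
    · exact h6 h'
    · simp [pow_eq_zero_iff] at h'; exact hb0 h'
  have hcube : ∀ i, (ρ i) ^ 3 = a / 2 * ρ i + b / 3 := by
    intro i
    rw [ha, hb]
    match i with
    | 0 => simp only [h2sub]; ring
    | 1 => simp only [h2sub]; ring
    | 2 => simp only [h2sub]; ring
  set x : Fin 3 → ℂ := fun i => a * ρ i / b with hxdef
  have hx : ∀ i, (x i).im = 0 := by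
    intro i
    apply cubic_root_real (6 + m) (by linarith)
    have h3 := hcube i
    push_cast
    simp only [hxdef]
    field_simp
    linear_combination (6 * (ρ i)^3) * hab + (6 * ((6:ℂ)+(m:ℂ)) * b^2) * h3
  have hxc : ∀ i, (starRingEnd ℂ) (x i) = x i := fun i => Complex.conj_eq_iff_im.mpr (hx i)
  have hxre : ∀ i, x i = (((x i).re : ℝ) : ℂ) := fun i => Complex.ext rfl (by simp [hx i])
  have hρ : ∀ i, ρ i = b / a * x i := by
    intro i; simp only [hxdef]; field_simp
  set K : ℝ := Complex.normSq (b / a) with hK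
  have hprod : ∀ i j, ρ i * (starRingEnd ℂ) (ρ j) = ((K * (x i).re * (x j).re : ℝ) : ℂ) := by
    intro i j
    calc ρ i * (starRingEnd ℂ) (ρ j)
        = (b/a * (starRingEnd ℂ) (b/a)) * (x i * x j) := by
          rw [hρ i, hρ j, map_mul, hxc j]; ring
      _ = ((K : ℝ) : ℂ) * (((x i).re:ℂ) * ((x j).re:ℂ)) := by
          rw [Complex.mul_conj, ← hxre i, ← hxre j]
      _ = ((K * (x i).re * (x j).re : ℝ) : ℂ) := by push_cast; ring
  constructor
  · intro i j; rw [hprod]; exact Complex.ofReal_im _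
  · have hdiag : ∀ i, ((‖ρ i‖ : ℂ)) ^ 2 = ρ i * (starRingEnd ℂ) (ρ i) := by
      intro i
      rw [Complex.mul_conj]
      norm_cast
      rw [Complex.normSq_eq_norm_sq]
    have hsym : ∀ i j, ρ i * (starRingEnd ℂ) (ρ j) = ρ j * (starRingEnd ℂ) (ρ i) := by
      intro i j; rw [hprod, hprod]; norm_cast; ring
    have huniv : (Finset.univ : Finset (Fin 3 × Fin 3)).val =
        {((0:Fin 3),(0:Fin 3)),(0,1),(0,2),(1,0),(1,1),(1,2),(2,0),(2,1),(2,2)} := by decide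
    rw [huniv]
    simp only [Multiset.insert_eq_cons, Multiset.map_cons, Multiset.map_singleton]
    rw [hdiag 0, hdiag 1, hdiag 2, hsym 1 0, hsym 2 1, hsym 0 2]
    simp only [← Multiset.singleton_add]
    abel
end

section
/- Let ρ₁, ρ₂, ρ₃ ∈ ℂ with ρ₁ + ρ₂ + ρ₃ = 0, not all zero, and suppose a := ρ₁² + ρ₂² + ρ₃² = 0 while b := ρ₁³ + ρ₂³ + ρ₃³ ≠ 0. Then there exists t > 0 and a primitive cube root of unity structure such that the three values ρᵢ differ from each other by cube roots of unity times a common factor: ρᵢ = λᵢ ρ with λᵢ³ = 1 and λ₁λ₂λ₃ = 1, λ₁+λ₂+λ₃ = 0, and the nine products ρᵢ·conj(ρⱼ) take exactly three distinct values t, τ, conj(τ) (t = |ρ|² real, τ = ρ·conj(ρ)·λ for λ a primitive cube root of unity), each with multiplicity three. -/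
open Complex

lemma perm9 {α : Type*} (x y z : α) :
    ({x, y, z, z, x, y, y, z, x} : Multiset α) = {x, x, x, z, z, z, y, y, y} := by
  classical
  rw [Multiset.ext]
  intro a
  simp only [Multiset.insert_eq_cons, Multiset.count_cons, Multiset.count_singleton]
  split_ifs <;> omega

/-- type IM^[−6] — if `ρ₁+ρ₂+ρ₃ = 0`, not all zero, with
`a = Σρᵢ² = 0` and `b = Σρᵢ³ ≠ 0`, then the `ρᵢ` differ by cube roots of unity
(`ρᵢ = λᵢ ρ` with `λᵢ³ = 1`, `λ₁λ₂λ₃ = 1`, `Σλᵢ = 0`) and the nine products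
`ρᵢ conj ρⱼ` take exactly the three values `t = |ρ|²`, `τ = |ρ|²λ` and `conj τ`
(with `λ` a primitive cube root of unity), each with multiplicity three. -/
theorem BR_typeIMminus6_structure (ρ : Fin 3 → ℂ)
    (hsum : ρ 0 + ρ 1 + ρ 2 = 0)
    (hnz : ¬ (ρ 0 = 0 ∧ ρ 1 = 0 ∧ ρ 2 = 0))
    (ha : ρ 0 ^ 2 + ρ 1 ^ 2 + ρ 2 ^ 2 = 0)
    (hb : ρ 0 ^ 3 + ρ 1 ^ 3 + ρ 2 ^ 3 ≠ 0) :
    ∃ (t : ℝ) (ρ₀ : ℂ) (lam : Fin 3 → ℂ) (μ τ : ℂ),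
      0 < t ∧ t = ‖ρ₀‖ ^ 2 ∧
      (∀ i, lam i ^ 3 = 1) ∧
      lam 0 * lam 1 * lam 2 = 1 ∧
      lam 0 + lam 1 + lam 2 = 0 ∧
      (∀ i, ρ i = lam i * ρ₀) ∧
      μ ^ 3 = 1 ∧ μ ≠ 1 ∧
      τ = ρ₀ * (starRingEnd ℂ) ρ₀ * μ ∧
      (Finset.univ : Finset (Fin 3 × Fin 3)).val.map
          (fun p => ρ p.1 * (starRingEnd ℂ) (ρ p.2)) =
        {(t : ℂ), (t : ℂ), (t : ℂ), τ, τ, τ,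
          (starRingEnd ℂ) τ, (starRingEnd ℂ) τ, (starRingEnd ℂ) τ} := by
  have he2 : ρ 0 * ρ 1 + ρ 0 * ρ 2 + ρ 1 * ρ 2 = 0 := by
    have h : (ρ 0 + ρ 1 + ρ 2) ^ 2 = (ρ 0 ^ 2 + ρ 1 ^ 2 + ρ 2 ^ 2)
        + 2 * (ρ 0 * ρ 1 + ρ 0 * ρ 2 + ρ 1 * ρ 2) := by ring
    rw [hsum, ha] at h
    linear_combination -h / 2
  have he3 : ρ 0 * ρ 1 * ρ 2 ≠ 0 := by
    intro h
    apply hb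
    linear_combination (ρ 0 ^ 2 + ρ 1 ^ 2 + ρ 2 ^ 2 - ρ 0 * ρ 1 - ρ 0 * ρ 2 - ρ 1 * ρ 2) * hsum
      + 3 * h
  have hc0 : ρ 0 ^ 3 = ρ 0 * ρ 1 * ρ 2 := by linear_combination ρ 0 ^ 2 * hsum - ρ 0 * he2
  have hc1 : ρ 1 ^ 3 = ρ 0 * ρ 1 * ρ 2 := by linear_combination ρ 1 ^ 2 * hsum - ρ 1 * he2
  have hc2 : ρ 2 ^ 3 = ρ 0 * ρ 1 * ρ 2 := by linear_combination ρ 2 ^ 2 * hsum - ρ 2 * he2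
  have h0 : ρ 0 ≠ 0 := fun h => he3 (by rw [← hc0, h]; ring)
  obtain ⟨μ, hρ1, hμ3⟩ : ∃ μ : ℂ, ρ 1 = μ * ρ 0 ∧ μ ^ 3 = 1 :=
    ⟨ρ 1 / ρ 0, by field_simp, by rw [div_pow, hc1, hc0, div_self he3]⟩
  have hμ0 : μ ≠ 0 := by
    intro h; rw [h] at hμ3; simp at hμ3
  have hμne : μ ≠ 1 := by
    intro h
    have h1 : ρ 1 = ρ 0 := by rw [hρ1, h, one_mul]
    have h2 : ρ 2 = -2 * ρ 0 := by linear_combination hsum - h1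
    have h9 : (9 : ℂ) * ρ 0 ^ 3 = 0 := by
      linear_combination hc0 - hc2 + (ρ 2 ^ 2 - 2 * ρ 0 * ρ 2 + 4 * ρ 0 ^ 2) * h2
    have h3 : ρ 0 ^ 3 = 0 := by
      rcases mul_eq_zero.mp h9 with h' | h'
      · norm_num at h'
      · exact h'
    exact h0 ((pow_eq_zero_iff three_ne_zero).mp h3)
  have hμq : μ ^ 2 + μ + 1 = 0 := by
    have h : (μ - 1) * (μ ^ 2 + μ + 1) = 0 := by linear_combination hμ3
    rcases mul_eq_zero.mp h with h | h
    · exact absurd (by linear_combination h) hμne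
    · exact h
  have hρ2' : ρ 2 = μ ^ 2 * ρ 0 := by
    have h : ρ 2 = -ρ 0 - ρ 1 := by linear_combination hsum
    rw [h, hρ1]
    linear_combination - ρ 0 * hμq
  have habs : ‖μ‖ = 1 := by
    have h : ‖μ‖ ^ 3 = 1 := by rw [← norm_pow, hμ3, norm_one]
    nlinarith [norm_nonneg μ, sq_nonneg (‖μ‖ - 1),
      sq_nonneg (‖μ‖ + 1)]
  have hconjμ : (starRingEnd ℂ) μ = μ ^ 2 := by
    have h1 : μ * (starRingEnd ℂ) μ = 1 := by
      rw [Complex.mul_conj]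
      norm_cast
      rw [Complex.normSq_eq_norm_sq, habs]; norm_num
    have h2 : μ * μ ^ 2 = 1 := by linear_combination hμ3
    exact mul_left_cancel₀ hμ0 (h1.trans h2.symm)
  have hconjμ2 : (starRingEnd ℂ) (μ ^ 2) = μ := by
    rw [map_pow, hconjμ]
    linear_combination μ * hμ3
  refine ⟨‖ρ 0‖ ^ 2, ρ 0, ![1, μ, μ ^ 2], μ, ρ 0 * (starRingEnd ℂ) (ρ 0) * μ,
    pow_pos (norm_pos_iff.mpr h0) 2, rfl, ?_, ?_, ?_, ?_, hμ3, hμne, rfl, ?_⟩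
  · intro i
    fin_cases i
    · show (1 : ℂ) ^ 3 = 1; norm_num
    · show μ ^ 3 = 1; exact hμ3
    · show (μ ^ 2) ^ 3 = 1; linear_combination (μ ^ 3 + 1) * hμ3
  · simp only [Matrix.cons_val_zero, Matrix.cons_val_one, Matrix.head_cons,
      Matrix.cons_val_two, Matrix.tail_cons, one_mul]
    linear_combination hμ3
  · simp only [Matrix.cons_val_zero, Matrix.cons_val_one, Matrix.head_cons,
      Matrix.cons_val_two, Matrix.tail_cons]
    linear_combination hμq
  · intro i
    fin_cases i
    · show ρ 0 = 1 * ρ 0; rw [one_mul]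
    · show ρ 1 = μ * ρ 0; exact hρ1
    · show ρ 2 = μ ^ 2 * ρ 0; exact hρ2'
  · -- the multiset identity
    have huniv : (Finset.univ : Finset (Fin 3 × Fin 3)).val =
        {((0 : Fin 3), (0 : Fin 3)), (0, 1), (0, 2), (1, 0), (1, 1), (1, 2),
         (2, 0), (2, 1), (2, 2)} := by decide
    rw [huniv]
    simp only [Multiset.insert_eq_cons, Multiset.map_cons, Multiset.map_singleton]
    set c : ℂ := ρ 0 * (starRingEnd ℂ) (ρ 0) with hcdef
    have hct : ((‖ρ 0‖ ^ 2 : ℝ) : ℂ) = c := by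
      rw [hcdef, Complex.mul_conj]
      norm_cast
      rw [Complex.sq_norm]
    have hτc : (starRingEnd ℂ) (c * μ) = c * μ ^ 2 := by
      rw [hcdef]
      simp only [map_mul, Complex.conj_conj, hconjμ]
      ring
    have key : ∀ i j : Fin 3, ρ i * (starRingEnd ℂ) (ρ j) =
        (![1, μ, μ ^ 2] i) * (starRingEnd ℂ) (![1, μ, μ ^ 2] j) * c := by
      intro i j
      have hi : ρ i = (![1, μ, μ ^ 2] i) * ρ 0 := by
        fin_cases i <;> simp [hρ1, hρ2']
      have hj : ρ j = (![1, μ, μ ^ 2] j) * ρ 0 := by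
        fin_cases j <;> simp [hρ1, hρ2']
      rw [hi, hj, map_mul, hcdef]; ring
    have p00 : ρ 0 * (starRingEnd ℂ) (ρ 0) = c := rfl
    have p01 : ρ 0 * (starRingEnd ℂ) (ρ 1) = c * μ ^ 2 := by
      rw [key 0 1]; simp [hconjμ]; ring
    have p02 : ρ 0 * (starRingEnd ℂ) (ρ 2) = c * μ := by
      rw [key 0 2]; simp [hconjμ2]; ring
    have p10 : ρ 1 * (starRingEnd ℂ) (ρ 0) = c * μ := by
      rw [key 1 0]; simp; ring
    have p11 : ρ 1 * (starRingEnd ℂ) (ρ 1) = c := by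
      rw [key 1 1]; simp [hconjμ]; linear_combination c * hμ3
    have p12 : ρ 1 * (starRingEnd ℂ) (ρ 2) = c * μ ^ 2 := by
      rw [key 1 2]; simp [hconjμ2]; ring
    have p20 : ρ 2 * (starRingEnd ℂ) (ρ 0) = c * μ ^ 2 := by
      rw [key 2 0]; simp; ring
    have p21 : ρ 2 * (starRingEnd ℂ) (ρ 1) = c * μ := by
      rw [key 2 1]; simp [hconjμ]; linear_combination μ * c * hμ3
    have p22 : ρ 2 * (starRingEnd ℂ) (ρ 2) = c := by
      rw [key 2 2]; simp [hconjμ2]; linear_combination c * hμ3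
    rw [p01, p02, p10, p11, p12, p20, p21, p22, hct, hτc]
    exact perm9 c (c * μ ^ 2) (c * μ)
end

section
/- With e₁, e₂, e₃ orthonormal in a real inner product space, A = Σ eᵢ⊗eᵢ, C = Σ_{i<j} (eᵢ ⊗̃ eⱼ)⊗(eᵢ ⊗̃ eⱼ) where u ⊗̃ v := u⊗v + v⊗u, and x any vector with components xᵢ = ⟨eᵢ, x⟩, the 2-tensor E := A(x)⊗A(x) − ½·C(x,x) satisfies E = Σᵢ xᵢ²· eᵢ⊗eᵢ. -/
/-- Appendix C.2, tensor E: with `e₁,e₂,e₃` orthonormal,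
`A = Σ eᵢ⊗eᵢ`, `C = Σ_{i<j} (eᵢ⊗̃eⱼ)⊗(eᵢ⊗̃eⱼ)` and `xᵢ = ⟨eᵢ,x⟩`, the
2-tensor `E = A(x)⊗A(x) − ½ C(x,x)` equals `Σᵢ xᵢ² eᵢ⊗eᵢ`. -/
theorem tensor_E_identity
    {V : Type*} [NormedAddCommGroup V] [InnerProductSpace ℝ V]
    (e : Fin 3 → V) (he : Orthonormal ℝ e) (x : V)
    (xc : Fin 3 → ℝ) (hxc : ∀ i, xc i = (inner ℝ (e i) x : ℝ)) :
    ∀ y z : V,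
      (∑ i, xc i * (inner ℝ (e i) y : ℝ)) * (∑ j, xc j * (inner ℝ (e j) z : ℝ)) -
        (1 / 2 : ℝ) *
          (∑ i, ∑ j, if i < j then
            (2 * xc i * xc j) *
              ((inner ℝ (e i) y : ℝ) * (inner ℝ (e j) z : ℝ) +
                (inner ℝ (e j) y : ℝ) * (inner ℝ (e i) z : ℝ)) else 0) =
      ∑ i, xc i ^ 2 * (inner ℝ (e i) y : ℝ) * (inner ℝ (e i) z : ℝ) := by
  intro y z
  simp only [Fin.sum_univ_three]
  norm_num [Fin.lt_def, Fin.ext_iff]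
  ring
end

section
/- Let {Π, Λ, K, N, N̄, Ω, Ω̄, M, M̄} be the complex null frame of traceless symmetric tensors built from a null SD-bivector frame {𝒰, ℒ, 𝒦} via Π = 𝒰·conj(𝒰), Λ = ℒ·conj(ℒ), K = 𝒦·conj(𝒦), N = 𝒰·conj(ℒ), Ω = 𝒰·conj(𝒦), M = ℒ·conj(𝒦). Then the identity metric Γ on the 9-dimensional space of traceless symmetric tensors decomposes as Γ = Π⊗Π + Λ⊗̃K + M⊗̃M̄ + N⊗̃Ω + N̄⊗̃Ω̄, where A⊗̃B := A⊗B + B⊗A and Γ_{αβμν} = ½(g_{αμ}g_{βν} + g_{αν}g_{βμ}) − ¼g_{αβ}g_{μν}. -/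
open Matrix

noncomputable section

/-- Minkowski metric of signature (−,+,+,+), complexified. -/
def ηm : Matrix (Fin 4) (Fin 4) ℂ := Matrix.diagonal ![-1, 1, 1, 1]

def Bf (x y : Fin 4 → ℂ) : ℂ := x ⬝ᵥ ηm.mulVec y

def lo (v : Fin 4 → ℂ) : Fin 4 → ℂ := ηm.mulVec v

/-- Lower-index wedge product `x♭ ∧ y♭` of two vectors. -/
def wdg (x y : Fin 4 → ℂ) : Matrix (Fin 4) (Fin 4) ℂ :=
  vecMulVec (lo x) (lo y) - vecMulVec (lo y) (lo x)

def conjM (F : Matrix (Fin 4) (Fin 4) ℂ) : Matrix (Fin 4) (Fin 4) ℂ :=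
  F.map (starRingEnd ℂ)

/-- Lower-index composition `(F·G)_{αβ} = F_{αμ} g^{μν} G_{νβ}`. -/
def compLow (F G : Matrix (Fin 4) (Fin 4) ℂ) : Matrix (Fin 4) (Fin 4) ℂ :=
  F * ηm * G

lemma Bf_symm (x y : Fin 4 → ℂ) : Bf x y = Bf y x := by
  simp [Bf, ηm, Matrix.mulVec, dotProduct, Fin.sum_univ_four, Matrix.diagonal]
  try ring

lemma lo_conj (x : Fin 4 → ℂ) (a : Fin 4) :
    lo (fun i => (starRingEnd ℂ) (x i)) a = (starRingEnd ℂ) (lo x a) := by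
  fin_cases a <;>
  simp [lo, ηm, Matrix.mulVec, dotProduct, Fin.sum_univ_four, Matrix.diagonal, _root_.map_mul, map_neg]

lemma Bf_conj (x y : Fin 4 → ℂ) :
    Bf (fun i => (starRingEnd ℂ) (x i)) (fun i => (starRingEnd ℂ) (y i)) = (starRingEnd ℂ) (Bf x y) := by
  simp [Bf, ηm, Matrix.mulVec, dotProduct, Fin.sum_univ_four, Matrix.diagonal, map_add, _root_.map_mul, map_neg]
  try ring

lemma key (x y u v : Fin 4 → ℂ) (a b : Fin 4) :
    compLow (wdg x y) (wdg u v) a b =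
      Bf y u * (lo x a * lo v b) - Bf y v * (lo x a * lo u b)
        - Bf x u * (lo y a * lo v b) + Bf x v * (lo y a * lo u b) := by
  simp [compLow, wdg, Bf, lo, ηm, Matrix.mul_apply, Matrix.mulVec, dotProduct,
    Fin.sum_univ_four, Matrix.diagonal, Matrix.vecMulVec_apply, Matrix.sub_apply]
  ring

lemma conjM_wdg (x y : Fin 4 → ℂ) :
    conjM (wdg x y) = wdg (fun i => (starRingEnd ℂ) (x i)) (fun i => (starRingEnd ℂ) (y i)) := by
  ext a b
  simp [conjM, wdg, Matrix.map_apply, Matrix.sub_apply, Matrix.vecMulVec_apply, map_sub,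
    _root_.map_mul, lo_conj]

lemma compLow_expand2 (c : ℂ) (X Y X' Y' : Matrix (Fin 4) (Fin 4) ℂ) (a b : Fin 4) :
    compLow (c • (X - Y)) (c • (X' - Y')) a b =
      c * c * (compLow X X' a b - compLow X Y' a b - compLow Y X' a b + compLow Y Y' a b) := by
  simp [compLow, Matrix.smul_mul, Matrix.mul_smul, Matrix.sub_mul, Matrix.mul_sub,
    Matrix.sub_apply, Matrix.smul_apply, smul_eq_mul]
  ring

lemma compLow_expand1 (c : ℂ) (X Y Z : Matrix (Fin 4) (Fin 4) ℂ) (a b : Fin 4) :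
    compLow (c • (X - Y)) Z a b = c * (compLow X Z a b - compLow Y Z a b) := by
  simp [compLow, Matrix.smul_mul, Matrix.sub_mul, Matrix.sub_apply, Matrix.smul_apply, smul_eq_mul]
  try ring

lemma conjM_smul_sub (c : ℂ) (X Y : Matrix (Fin 4) (Fin 4) ℂ) :
    conjM (c • (X - Y)) = (starRingEnd ℂ) c • (conjM X - conjM Y) := by
  ext a b
  simp [conjM, Matrix.map_apply, Matrix.sub_apply, Matrix.smul_apply, smul_eq_mul, map_sub,
    _root_.map_mul, mul_sub]

lemma ηm_symm (i j : Fin 4) : ηm i j = ηm j i := by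
  rcases eq_or_ne i j with h | h
  · rw [h]
  · simp [ηm, Matrix.diagonal_apply_ne _ h, Matrix.diagonal_apply_ne _ h.symm]

lemma eta_sq : ηm * ηm = 1 := by
  ext i j
  fin_cases i <;> fin_cases j <;>
    simp [ηm, Matrix.mul_apply, Fin.sum_univ_four, Matrix.diagonal, Matrix.one_apply]

lemma completeness (l k m mb : Fin 4 → ℂ)
    (hll : Bf l l = 0) (hkk : Bf k k = 0) (hlk : Bf l k = -1)
    (hmm : Bf m m = 0) (hmmb : Bf m mb = 1) (hmbmb : Bf mb mb = 0)
    (hlm : Bf l m = 0) (hkm : Bf k m = 0) (hlmb : Bf l mb = 0) (hkmb : Bf k mb = 0) :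
    ∀ a b : Fin 4, ηm a b =
      -(lo l a * lo k b) - lo k a * lo l b + lo m a * lo mb b + lo mb a * lo m b := by
  set A : Matrix (Fin 4) (Fin 4) ℂ := Matrix.of ![l, k, m, mb] with hA
  set C : Matrix (Fin 4) (Fin 4) ℂ := !![0,-1,0,0; -1,0,0,0; 0,0,0,1; 0,0,1,0] with hC
  have hGram : ∀ i j, (A * ηm * Aᵀ) i j = Bf (A i) (A j) := by
    intro i j
    simp [Matrix.mul_apply, Bf, Matrix.mulVec, dotProduct, Fin.sum_univ_four,
      Matrix.transpose_apply]
    ring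
  have hG : A * ηm * Aᵀ = C := by
    ext i j
    rw [hGram]
    fin_cases i <;> fin_cases j <;>
      simp [hA, hC] <;>
      first
        | assumption
        | (rw [Bf_symm]; assumption)
  have hCC : C * C = 1 := by
    ext i j
    fin_cases i <;> fin_cases j <;>
      simp [hC, Matrix.mul_apply, Fin.sum_univ_four, Matrix.one_apply, Matrix.vecHead, Matrix.vecTail]
  have h1 : A * (ηm * Aᵀ * C) = 1 := by
    simp only [← Matrix.mul_assoc]
    rw [hG, hCC]
  have h2 : (ηm * Aᵀ * C) * A = 1 := mul_eq_one_comm.mp h1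
  have h3 := congrArg (fun X => ηm * X) h2
  simp only [← Matrix.mul_assoc, mul_one] at h3
  rw [eta_sq] at h3
  simp only [one_mul] at h3
  -- h3 : Aᵀ * C * A = ηm
  have hfull : ηm * (Aᵀ * C * A) * ηm = ηm := by
    rw [h3, eta_sq, one_mul]
  have hY : ∀ p q, (Aᵀ * C * A) p q =
      -(l p * k q) - k p * l q + m p * mb q + mb p * m q := by
    intro p q
    simp [Matrix.mul_apply, Fin.sum_univ_four, Matrix.transpose_apply, hA, hC, Matrix.vecHead, Matrix.vecTail]
    ring
  intro a b
  conv_lhs => rw [← hfull]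
  simp only [Matrix.mul_apply, Fin.sum_univ_four, hY, lo, Matrix.mulVec, dotProduct]
  rw [ηm_symm 0 b, ηm_symm 1 b, ηm_symm 2 b, ηm_symm 3 b]
  ring

/-- decomposition of the metric `Γ` of the 9-dimensional space
of traceless symmetric tensors in the null frame
`{Π, Λ, K, N, N̄, Ω, Ω̄, M, M̄}`:
`Γ = Π⊗Π + Λ⊗̃K + M⊗̃M̄ + N⊗̃Ω + N̄⊗̃Ω̄`. -/
theorem Gamma_null_frame_decomposition (l k m : Fin 4 → ℂ)
    (hlreal : ∀ a, (starRingEnd ℂ) (l a) = l a)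
    (hkreal : ∀ a, (starRingEnd ℂ) (k a) = k a)
    (hll : Bf l l = 0) (hkk : Bf k k = 0) (hlk : Bf l k = -1)
    (hmm : Bf m m = 0) (hmmb : Bf m (fun a => (starRingEnd ℂ) (m a)) = 1)
    (hlm : Bf l m = 0) (hkm : Bf k m = 0)
    (hlmb : Bf l (fun a => (starRingEnd ℂ) (m a)) = 0)
    (hkmb : Bf k (fun a => (starRingEnd ℂ) (m a)) = 0)
    (𝒰 ℒ 𝒦 Pp Λ K N Ω M : Matrix (Fin 4) (Fin 4) ℂ)
    (h𝒰 : 𝒰 = ((Real.sqrt 2 : ℂ))⁻¹ • (wdg l k - wdg m (fun a => (starRingEnd ℂ) (m a))))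
    (hℒ : ℒ = wdg l m)
    (h𝒦 : 𝒦 = wdg k (fun a => (starRingEnd ℂ) (m a)))
    (hPp : Pp = compLow 𝒰 (conjM 𝒰))
    (hΛ : Λ = compLow ℒ (conjM ℒ))
    (hK : K = compLow 𝒦 (conjM 𝒦))
    (hN : N = compLow 𝒰 (conjM ℒ))
    (hΩ : Ω = compLow 𝒰 (conjM 𝒦))
    (hM : M = compLow ℒ (conjM 𝒦)) :
    ∀ a b c d : Fin 4,
      (1 / 2 : ℂ) * (ηm a c * ηm b d + ηm a d * ηm b c) -
          (1 / 4 : ℂ) * (ηm a b * ηm c d) =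
        Pp a b * Pp c d +
          (Λ a b * K c d + K a b * Λ c d) +
          (M a b * conjM M c d + conjM M a b * M c d) +
          (N a b * Ω c d + Ω a b * N c d) +
          (conjM N a b * conjM Ω c d + conjM Ω a b * conjM N c d) := by
  set mb : Fin 4 → ℂ := fun a => (starRingEnd ℂ) (m a) with hmbdef
  set sc : ℂ := ((Real.sqrt 2 : ℂ))⁻¹ with hscdef
  have hlc : (fun i => (starRingEnd ℂ) (l i)) = l := funext hlreal
  have hkc : (fun i => (starRingEnd ℂ) (k i)) = k := funext hkreal
  have hmbc : (fun i => (starRingEnd ℂ) (mb i)) = m := funext fun i => by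
    simp [hmbdef]
  have hsc : sc * sc = (1 / 2 : ℂ) := by
    rw [hscdef, ← mul_inv]
    norm_cast
    rw [Real.mul_self_sqrt (by norm_num)]
    norm_num
  have hscconj : (starRingEnd ℂ) sc = sc := by
    rw [hscdef, map_inv₀, Complex.conj_ofReal]
  -- symmetric / conjugate Bf facts
  have hkl : Bf k l = -1 := by rw [Bf_symm]; exact hlk
  have hml : Bf m l = 0 := by rw [Bf_symm]; exact hlm
  have hmk : Bf m k = 0 := by rw [Bf_symm]; exact hkm
  have hmbl : Bf mb l = 0 := by rw [Bf_symm]; exact hlmb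
  have hmbk : Bf mb k = 0 := by rw [Bf_symm]; exact hkmb
  have hmbm : Bf mb m = 1 := by rw [Bf_symm]; exact hmmb
  have hmbmb : Bf mb mb = 0 := by
    have := Bf_conj m m
    rw [hmm] at this
    simpa [hmbdef] using this
  -- conjugates of the bivectors
  have hcℒ : conjM ℒ = wdg l mb := by rw [hℒ, conjM_wdg, hlc]
  have hc𝒦 : conjM 𝒦 = wdg k m := by rw [h𝒦, conjM_wdg, hkc, hmbc]
  have hc𝒰 : conjM 𝒰 = sc • (wdg l k - wdg mb m) := by
    rw [h𝒰, conjM_smul_sub, hscconj, conjM_wdg, conjM_wdg, hlc, hkc, hmbc]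
  -- conjugation of lowered components
  have hLc : ∀ a, (starRingEnd ℂ) (lo l a) = lo l a := fun a => by
    rw [← lo_conj, hlc]
  have hKc : ∀ a, (starRingEnd ℂ) (lo k a) = lo k a := fun a => by
    rw [← lo_conj, hkc]
  have hMvc : ∀ a, (starRingEnd ℂ) (lo m a) = lo mb a := fun a => (lo_conj m a).symm
  have hNvc : ∀ a, (starRingEnd ℂ) (lo mb a) = lo m a := fun a => by
    rw [← lo_conj, hmbc]
  -- entrywise formulas
  have hPp' : ∀ a b, Pp a b =
      -(1/2 : ℂ) * (lo l a * lo k b + lo k a * lo l b + lo m a * lo mb b + lo mb a * lo m b) := by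
    intro a b
    rw [hPp, hc𝒰, h𝒰, compLow_expand2, hsc]
    simp only [key, hll, hkk, hlk, hkl, hmm, hmmb, hmbm, hmbmb, hlm, hkm, hlmb, hkmb,
      hml, hmk, hmbl, hmbk]
    ring
  have hΛ' : ∀ a b, Λ a b = -(lo l a * lo l b) := by
    intro a b
    rw [hΛ, hcℒ, hℒ, key]
    simp only [hll, hml, hmmb, hlmb]
    ring
  have hK' : ∀ a b, K a b = -(lo k a * lo k b) := by
    intro a b
    rw [hK, hc𝒦, h𝒦, key]
    simp only [hkk, hmbk, hmbm, hkm]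
    ring
  have hM' : ∀ a b, M a b = lo m a * lo m b := by
    intro a b
    rw [hM, hc𝒦, hℒ, key]
    simp only [hmk, hmm, hlk, hlm]
    ring
  have hMc' : ∀ a b, conjM M a b = lo mb a * lo mb b := by
    intro a b
    simp only [conjM, Matrix.map_apply]
    rw [hM' a b, _root_.map_mul, hMvc, hMvc]
  have hN1 : ∀ a b, N a b = sc * (-(lo l a * lo mb b) - lo mb a * lo l b) := by
    intro a b
    rw [hN, hcℒ, h𝒰, compLow_expand1]
    simp only [key, hkl, hkmb, hll, hlmb, hmbl, hmbmb, hml, hmmb]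
    ring
  have hΩ1 : ∀ a b, Ω a b = sc * (lo k a * lo m b + lo m a * lo k b) := by
    intro a b
    rw [hΩ, hc𝒦, h𝒰, compLow_expand1]
    simp only [key, hkk, hkm, hlk, hlm, hmbk, hmbm, hmk, hmm]
    ring
  have hNc1 : ∀ a b, conjM N a b = sc * (-(lo l a * lo m b) - lo m a * lo l b) := by
    intro a b
    simp only [conjM, Matrix.map_apply]
    rw [hN1 a b, _root_.map_mul, hscconj]
    simp only [map_sub, map_neg, _root_.map_mul, hLc, hNvc]
  have hΩc1 : ∀ a b, conjM Ω a b = sc * (lo k a * lo mb b + lo mb a * lo k b) := by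
    intro a b
    simp only [conjM, Matrix.map_apply]
    rw [hΩ1 a b, _root_.map_mul, hscconj]
    simp only [map_add, _root_.map_mul, hKc, hMvc]
  -- product formulas eliminating the scalar
  have hNΩ : ∀ a b e f, N a b * Ω e f =
      -(1/2 : ℂ) * ((lo l a * lo mb b + lo mb a * lo l b) * (lo k e * lo m f + lo m e * lo k f)) := by
    intro a b e f
    rw [hN1, hΩ1]
    linear_combination (-(lo l a * lo mb b + lo mb a * lo l b) *
      (lo k e * lo m f + lo m e * lo k f)) * hsc
  have hΩN : ∀ a b e f, Ω a b * N e f =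
      -(1/2 : ℂ) * ((lo k a * lo m b + lo m a * lo k b) * (lo l e * lo mb f + lo mb e * lo l f)) := by
    intro a b e f
    rw [hN1, hΩ1]
    linear_combination (-(lo k a * lo m b + lo m a * lo k b) *
      (lo l e * lo mb f + lo mb e * lo l f)) * hsc
  have hNcΩc : ∀ a b e f, conjM N a b * conjM Ω e f =
      -(1/2 : ℂ) * ((lo l a * lo m b + lo m a * lo l b) * (lo k e * lo mb f + lo mb e * lo k f)) := by
    intro a b e f
    rw [hNc1, hΩc1]
    linear_combination (-(lo l a * lo m b + lo m a * lo l b) *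
      (lo k e * lo mb f + lo mb e * lo k f)) * hsc
  have hΩcNc : ∀ a b e f, conjM Ω a b * conjM N e f =
      -(1/2 : ℂ) * ((lo k a * lo mb b + lo mb a * lo k b) * (lo l e * lo m f + lo m e * lo l f)) := by
    intro a b e f
    rw [hNc1, hΩc1]
    linear_combination (-(lo k a * lo mb b + lo mb a * lo k b) *
      (lo l e * lo m f + lo m e * lo l f)) * hsc
  -- completeness of the null tetrad
  have hη' := completeness l k m mb hll hkk hlk hmm hmmb hmbmb hlm hkm hlmb hkmb
  intro a b e f
  rw [hη' a e, hη' b f, hη' a f, hη' b e, hη' a b, hη' e f,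
    hPp' a b, hPp' e f, hΛ' a b, hK' e f, hK' a b, hΛ' e f,
    hM' a b, hMc' e f, hMc' a b, hM' e f,
    hNΩ, hΩN, hNcΩc, hΩcNc]
  ring
end
end

section
/- For the type III Bel-Robinson tensor T = Λ⊗̃Π + N⊗̃N̄ (where Λ, Π, N are built from a null SD frame {𝒰, ℒ, 𝒦} as Λ = ℒ·conj(ℒ), Π = 𝒰·conj(𝒰), N = 𝒰·conj(ℒ), and A⊗̃B = A⊗B + B⊗A), the square of T as an endomorphism of traceless symmetric tensors satisfies T² = Λ⊗Λ, and consequently T³ = 0 while T² ≠ 0. -/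
open Matrix

noncomputable section

/-- Full contraction `A^{μν} B_{μν}` of two (lower-index) 2-tensors. -/
def pr (A B : Matrix (Fin 4) (Fin 4) ℂ) : ℂ := (ηm * A * ηm * B).trace

lemma L1 (a b c d : Fin 4 → ℂ) :
    vecMulVec (lo a) (lo b) * ηm * vecMulVec (lo c) (lo d)
      = Bf b c • vecMulVec (lo a) (lo d) := by
  ext i j
  simp [vecMulVec, Matrix.mul_apply, ηm, Bf, lo, Matrix.mulVec, dotProduct,
    Fin.sum_univ_four, Matrix.diagonal, Matrix.smul_apply]
  ring

lemma L2 (a b c d : Fin 4 → ℂ) :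
    pr (vecMulVec (lo a) (lo b)) (vecMulVec (lo c) (lo d)) = Bf b c * Bf d a := by
  simp [pr, vecMulVec, Matrix.mul_apply, ηm, Bf, lo, Matrix.mulVec, dotProduct,
    Fin.sum_univ_four, Matrix.diagonal, Matrix.trace, Matrix.diag]
  ring

lemma conjM_P (a b : Fin 4 → ℂ) :
    conjM (vecMulVec (lo a) (lo b))
      = vecMulVec (lo (fun i => (starRingEnd ℂ) (a i))) (lo (fun i => (starRingEnd ℂ) (b i))) := by
  ext i j
  simp [conjM, vecMulVec, lo, ηm, Matrix.mulVec, dotProduct, Fin.sum_univ_four,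
    Matrix.diagonal, Matrix.map_apply]
  fin_cases i <;> fin_cases j <;> simp

lemma pr_add_left (A B C : Matrix (Fin 4) (Fin 4) ℂ) : pr (A + B) C = pr A C + pr B C := by
  simp [pr, Matrix.mul_add, Matrix.add_mul]
lemma pr_add_right (A B C : Matrix (Fin 4) (Fin 4) ℂ) : pr A (B + C) = pr A B + pr A C := by
  simp [pr, Matrix.mul_add]
lemma pr_sub_left (A B C : Matrix (Fin 4) (Fin 4) ℂ) : pr (A - B) C = pr A C - pr B C := by
  simp [pr, Matrix.mul_sub, Matrix.sub_mul]
lemma pr_sub_right (A B C : Matrix (Fin 4) (Fin 4) ℂ) : pr A (B - C) = pr A B - pr A C := by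
  simp [pr, Matrix.mul_sub]
lemma pr_smul_left (r : ℂ) (A B : Matrix (Fin 4) (Fin 4) ℂ) : pr (r • A) B = r * pr A B := by
  simp [pr, Matrix.mul_smul, Matrix.smul_mul]
lemma pr_smul_right (r : ℂ) (A B : Matrix (Fin 4) (Fin 4) ℂ) : pr A (r • B) = r * pr A B := by
  simp [pr, Matrix.mul_smul]
lemma pr_neg_left (A B : Matrix (Fin 4) (Fin 4) ℂ) : pr (-A) B = - pr A B := by
  simp [pr, Matrix.neg_mul, Matrix.mul_neg]
lemma pr_neg_right (A B : Matrix (Fin 4) (Fin 4) ℂ) : pr A (-B) = - pr A B := by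
  simp [pr, Matrix.mul_neg]

lemma conjM_add (A B : Matrix (Fin 4) (Fin 4) ℂ) : conjM (A + B) = conjM A + conjM B := by
  ext i j; simp [conjM]
lemma conjM_sub (A B : Matrix (Fin 4) (Fin 4) ℂ) : conjM (A - B) = conjM A - conjM B := by
  ext i j; simp [conjM]
lemma conjM_smul (r : ℂ) (A : Matrix (Fin 4) (Fin 4) ℂ) :
    conjM (r • A) = (starRingEnd ℂ) r • conjM A := by
  ext i j; simp [conjM]
lemma conjM_neg (A : Matrix (Fin 4) (Fin 4) ℂ) : conjM (-A) = - conjM A := by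
  ext i j; simp [conjM]

/-- type III: for `T = Λ⊗̃Π + N⊗̃N̄`, acting on traceless
symmetric tensors by `T(X) = (Π,X)Λ + (Λ,X)Π + (N̄,X)N + (N,X)N̄`, one has
`T² = Λ⊗Λ`, hence `T³ = 0` and `T² ≠ 0`. -/
theorem typeIII_BR_square (l k m : Fin 4 → ℂ)
    (hlreal : ∀ a, (starRingEnd ℂ) (l a) = l a)
    (hkreal : ∀ a, (starRingEnd ℂ) (k a) = k a)
    (hll : Bf l l = 0) (hkk : Bf k k = 0) (hlk : Bf l k = -1)
    (hmm : Bf m m = 0) (hmmb : Bf m (fun a => (starRingEnd ℂ) (m a)) = 1)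
    (hlm : Bf l m = 0) (hkm : Bf k m = 0)
    (hlmb : Bf l (fun a => (starRingEnd ℂ) (m a)) = 0)
    (hkmb : Bf k (fun a => (starRingEnd ℂ) (m a)) = 0)
    (𝒰 ℒ Pp Λ N : Matrix (Fin 4) (Fin 4) ℂ)
    (h𝒰 : 𝒰 = ((Real.sqrt 2 : ℂ))⁻¹ • (wdg l k - wdg m (fun a => (starRingEnd ℂ) (m a))))
    (hℒ : ℒ = wdg l m)
    (hPp : Pp = compLow 𝒰 (conjM 𝒰))
    (hΛ : Λ = compLow ℒ (conjM ℒ))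
    (hN : N = compLow 𝒰 (conjM ℒ))
    (T : Matrix (Fin 4) (Fin 4) ℂ → Matrix (Fin 4) (Fin 4) ℂ)
    (hTdef : ∀ X, T X =
      pr Pp X • Λ + pr Λ X • Pp + pr (conjM N) X • N + pr N X • conjM N) :
    (∀ X, T (T X) = pr Λ X • Λ) ∧
    (∀ X, T (T (T X)) = 0) ∧
    (∃ X, T (T X) ≠ 0) := by
  classical
  set mb : Fin 4 → ℂ := fun a => (starRingEnd ℂ) (m a) with hmbdef
  have hcl : (fun i => (starRingEnd ℂ) (l i)) = l := funext hlreal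
  have hck : (fun i => (starRingEnd ℂ) (k i)) = k := funext hkreal
  have hcmb : (fun i => (starRingEnd ℂ) (mb i)) = m := by
    funext i; simp [hmbdef]
  have hcm : (fun i => (starRingEnd ℂ) (m i)) = mb := rfl
  -- derived Bf values
  have hml : Bf m l = 0 := (Bf_symm m l).trans hlm
  have hmk : Bf m k = 0 := (Bf_symm m k).trans hkm
  have hmbl : Bf mb l = 0 := (Bf_symm mb l).trans hlmb
  have hmbk : Bf mb k = 0 := (Bf_symm mb k).trans hkmb
  have hkl : Bf k l = -1 := (Bf_symm k l).trans hlk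
  have hmbm : Bf mb m = 1 := (Bf_symm mb m).trans hmmb
  have hmbmb : Bf mb mb = 0 := by
    have := Bf_conj m m
    rw [hmm] at this
    simpa [hcm] using this
  -- conjugates of the wedges
  have hcwlm : conjM (wdg l m) = wdg l mb := by
    simp only [wdg, conjM_sub, conjM_P, hcl, hcm]
  have hcwlk : conjM (wdg l k) = wdg l k := by
    simp only [wdg, conjM_sub, conjM_P, hcl, hck]
  have hcwm : conjM (wdg m mb) = wdg mb m := by
    simp only [wdg, conjM_sub, conjM_P, hcm, hcmb]
  have hcc : (starRingEnd ℂ) ((Real.sqrt 2 : ℂ))⁻¹ = ((Real.sqrt 2 : ℂ))⁻¹ := by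
    simp [map_inv₀, Complex.conj_ofReal]
  -- explicit rank-one forms
  have hΛe : Λ = -(vecMulVec (lo l) (lo l)) := by
    rw [hΛ, hℒ, hcwlm, compLow]
    simp only [wdg, Matrix.sub_mul, Matrix.mul_sub, L1]
    simp only [hml, hmmb, hll, hlmb]
    simp
  have hNe : N = ((Real.sqrt 2 : ℂ))⁻¹ •
      (-(vecMulVec (lo l) (lo mb)) - vecMulVec (lo mb) (lo l)) := by
    rw [hN, h𝒰, hℒ, hcwlm, compLow]
    simp only [wdg, Matrix.smul_mul, Matrix.mul_smul, Matrix.sub_mul, Matrix.mul_sub, L1]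
    simp only [hkl, hkmb, hll, hlmb, hmbl, hmbmb, hml, hmmb]
    module
  have hNbe : conjM N = ((Real.sqrt 2 : ℂ))⁻¹ •
      (-(vecMulVec (lo l) (lo m)) - vecMulVec (lo m) (lo l)) := by
    rw [hNe]
    simp only [conjM_smul, hcc, conjM_sub, conjM_neg, conjM_P, hcl, hcmb]
  have hc2 : ((Real.sqrt 2 : ℂ))⁻¹ * ((Real.sqrt 2 : ℂ))⁻¹ = (2 : ℂ)⁻¹ := by
    rw [← mul_inv]
    congr 1
    norm_cast
    exact Real.mul_self_sqrt (by norm_num)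
  have hPie : Pp = (((Real.sqrt 2 : ℂ))⁻¹ * ((Real.sqrt 2 : ℂ))⁻¹) •
      (-(vecMulVec (lo m) (lo mb)) - vecMulVec (lo mb) (lo m)
        - vecMulVec (lo l) (lo k) - vecMulVec (lo k) (lo l)) := by
    rw [hPp, h𝒰, conjM_smul, hcc, conjM_sub, hcwlk, hcwm, compLow]
    simp only [wdg, Matrix.smul_mul, Matrix.mul_smul, Matrix.sub_mul, Matrix.mul_sub, L1]
    simp only [hkl, hkk, hll, hlk, hkmb, hkm, hlmb, hlm, hmbl, hmbk, hmbmb, hmbm,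
      hml, hmk, hmm, hmmb]
    module
  rw [hc2] at hPie
  -- the sixteen pairings
  have pLL : pr Λ Λ = 0 := by
    rw [hΛe]
    simp [pr_neg_left, pr_neg_right, L2, hll]
  have pLPi : pr Λ Pp = 0 := by
    rw [hΛe, hPie]
    simp [pr_smul_right, pr_add_right, pr_sub_right, pr_neg_left, pr_neg_right, L2,
      hll, hml, hmbl, hkl, hlm, hlmb, hlk]
  have pPiL : pr Pp Λ = 0 := by
    rw [hΛe, hPie]
    simp [pr_smul_left, pr_add_left, pr_sub_left, pr_neg_left, pr_neg_right, L2,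
      hll, hml, hmbl, hkl, hlm, hlmb, hlk]
  have pPiPi : pr Pp Pp = 1 := by
    rw [hPie]
    simp only [pr_smul_left, pr_smul_right, pr_add_left, pr_add_right,
      pr_sub_left, pr_sub_right, pr_neg_left, pr_neg_right, L2,
      hll, hkk, hlk, hkl, hlm, hlmb, hkm, hkmb, hml, hmk, hmbl, hmbk,
      hmm, hmmb, hmbm, hmbmb]
    norm_num
  have pLN : pr Λ N = 0 := by
    rw [hΛe, hNe]
    simp [pr_smul_right, pr_sub_right, pr_neg_left, pr_neg_right, L2,
      hll, hlmb, hlm, hmbl, hml]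
  have pNL : pr N Λ = 0 := by
    rw [hΛe, hNe]
    simp [pr_smul_left, pr_sub_left, pr_neg_left, pr_neg_right, L2,
      hll, hlmb, hlm, hmbl, hml]
  have pLNb : pr Λ (conjM N) = 0 := by
    rw [hΛe, hNbe]
    simp [pr_smul_right, pr_sub_right, pr_neg_left, pr_neg_right, L2,
      hll, hlmb, hlm, hmbl, hml]
  have pNbL : pr (conjM N) Λ = 0 := by
    rw [hΛe, hNbe]
    simp [pr_smul_left, pr_sub_left, pr_neg_left, pr_neg_right, L2,
      hll, hlmb, hlm, hmbl, hml]
  have pPiN : pr Pp N = 0 := by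
    rw [hPie, hNe]
    simp [pr_smul_left, pr_smul_right, pr_add_left, pr_sub_left, pr_sub_right,
      pr_neg_left, pr_neg_right, L2,
      hll, hlk, hkl, hlm, hlmb, hkm, hkmb, hml, hmk, hmbl, hmbk, hmm, hmmb, hmbm, hmbmb]
  have pNPi : pr N Pp = 0 := by
    rw [hPie, hNe]
    simp [pr_smul_left, pr_smul_right, pr_add_right, pr_sub_left, pr_sub_right,
      pr_neg_left, pr_neg_right, L2,
      hll, hlk, hkl, hlm, hlmb, hkm, hkmb, hml, hmk, hmbl, hmbk, hmm, hmmb, hmbm, hmbmb]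
  have pPiNb : pr Pp (conjM N) = 0 := by
    rw [hPie, hNbe]
    simp [pr_smul_left, pr_smul_right, pr_add_left, pr_sub_left, pr_sub_right,
      pr_neg_left, pr_neg_right, L2,
      hll, hlk, hkl, hlm, hlmb, hkm, hkmb, hml, hmk, hmbl, hmbk, hmm, hmmb, hmbm, hmbmb]
  have pNbPi : pr (conjM N) Pp = 0 := by
    rw [hPie, hNbe]
    simp [pr_smul_left, pr_smul_right, pr_add_right, pr_sub_left, pr_sub_right,
      pr_neg_left, pr_neg_right, L2,
      hll, hlk, hkl, hlm, hlmb, hkm, hkmb, hml, hmk, hmbl, hmbk, hmm, hmmb, hmbm, hmbmb]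
  have pNN : pr N N = 0 := by
    rw [hNe]
    simp [pr_smul_left, pr_smul_right, pr_sub_left, pr_sub_right, pr_neg_left, pr_neg_right, L2, hll, hlmb, hmbl, hmbmb]
  have pNbNb : pr (conjM N) (conjM N) = 0 := by
    rw [hNbe]
    simp [pr_smul_left, pr_smul_right, pr_sub_left, pr_sub_right, pr_neg_left, pr_neg_right, L2, hll, hlm, hml, hmm]
  have pNNb : pr N (conjM N) = 0 := by
    rw [hNbe, hNe]
    simp [pr_smul_left, pr_smul_right, pr_sub_left, pr_sub_right, pr_neg_left, pr_neg_right, L2, hll, hlm, hlmb, hml, hmbl, hmbm, hmmb]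
  have pNbN : pr (conjM N) N = 0 := by
    rw [hNbe, hNe]
    simp [pr_smul_left, pr_smul_right, pr_sub_left, pr_sub_right, pr_neg_left, pr_neg_right, L2, hll, hlm, hlmb, hml, hmbl, hmbm, hmmb]
  -- the square
  have hsq : ∀ X, T (T X) = pr Λ X • Λ := by
    intro X
    rw [hTdef, hTdef X]
    simp only [pr_add_right, pr_smul_right,
      pLL, pLPi, pPiL, pPiPi, pLN, pNL, pLNb, pNbL, pPiN, pNPi, pPiNb, pNbPi,
      pNN, pNbNb, pNNb, pNbN]
    simp
  refine ⟨hsq, ?_, ?_⟩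
  · intro X
    rw [hsq (T X), hTdef X]
    simp only [pr_add_right, pr_smul_right, pLL, pLPi, pLN, pLNb]
    simp
  · refine ⟨vecMulVec (lo k) (lo k), ?_⟩
    rw [hsq]
    have hv : pr Λ (vecMulVec (lo k) (lo k)) = -1 := by
      rw [hΛe]
      simp [pr_neg_left, L2, hlk, hkl]
    rw [hv, hΛe]
    intro hcon
    have hPll : vecMulVec (lo l) (lo l) = 0 := by
      have h2 : (-1 : ℂ) • (-(vecMulVec (lo l) (lo l))) = vecMulVec (lo l) (lo l) := by simp
      rw [h2] at hcon
      exact hcon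
    have hz : ∀ i, lo l i = 0 := by
      intro i
      have := congrFun (congrFun hPll i) i
      simpa [vecMulVec, mul_self_eq_zero] using this
    have hzero : Bf k l = 0 := by
      have hlol : ηm.mulVec l = lo l := rfl
      simp [Bf, dotProduct, hlol, Fin.sum_univ_four, hz]
    rw [hkl] at hzero
    norm_num at hzero
end
end
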